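/- arXiv:1805.02746 — 3 statements merged into one kernel-verified Lean document; each statement's English description precedes it below -/
import Mathlib

section
/- Let 𝒢 ⊆ [ℕ]^{<ℕ} be a hereditary family of finite subsets of ℕ. Then the following are equivalent: (i) there is no infinite set M ⊆ ℕ with all finite subsets of M in 𝒢; (ii) 𝒢 is compact in the Cantor topology (identifying finite sets with points of 2^ℕ); (iii) the Cantor–Bendixson index of 𝒢 is an ordinal (i.e., some Cantor–Bendixson derivative of 𝒢 is empty); (iv) the Cantor–Bendixson index of 𝒢 is countable. -/
/-- Identify a finite subset of `ℕ` with a point of the Cantor space `ℕ → Bool`. -/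
def toCantor (F : Finset ℕ) : ℕ → Bool := fun n => decide (n ∈ F)

/-- A family of finite subsets of `ℕ` is hereditary if it is closed under subsets. -/
def Hereditary (G : Set (Finset ℕ)) : Prop := ∀ ⦃E F : Finset ℕ⦄, E ⊆ F → F ∈ G → E ∈ G

/-- The Cantor–Bendixson derivative. -/
def cbDeriv {α : Type*} [TopologicalSpace α] (K : Set α) : Set α :=
  {x | x ∈ K ∧ x ∈ closure (K \ {x})}

/-- Transfinite Cantor–Bendixson iterates. -/
noncomputable def cbIter {α : Type*} [TopologicalSpace α] (K : Set α) (ξ : Ordinal) : Set α :=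
  Ordinal.limitRecOn ξ K (fun _ S => cbDeriv S)
    (fun o _ ih => ⋂ (ζ : Ordinal) (h : ζ < o), ih ζ h)

/-!
If some infinite `M` has all its finite subsets in `𝒢`, then the finite subsets of `M` form a
subset of `𝒢` without isolated points, which survives every Cantor–Bendixson derivative, and whose
closure contains the non-finite point `M`, so `𝒢` is not closed. Conversely, if there is no such
`M`, a limit point of `𝒢` has all finite subsets of its support in `𝒢` by heredity, so it is
a finite set in `𝒢`, and `𝒢` is closed. Moreover the Cantor–Bendixson iteration of the countable
set `𝒢` stabilises before `ω₁`; at the fixed point every element has a proper superset in the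
kernel, and a strictly increasing chain of those has an infinite union `M` as above.
-/

open Set PiNat Cardinal

theorem PiNat.mem_closure_iff_forall_cylinder_inter_nonempty {E : ℕ → Type*}
    [∀ n, TopologicalSpace (E n)] [∀ n, DiscreteTopology (E n)] {s : Set (∀ n, E n)}
    {x : ∀ n, E n} : x ∈ closure s ↔ ∀ n, (cylinder x n ∩ s).Nonempty := by
  rw [(isTopologicalBasis_cylinders E).mem_closure_iff]
  constructor
  · exact fun h n => h _ ⟨x, n, rfl⟩ (self_mem_cylinder x n)
  · rintro h _ ⟨y, n, rfl⟩ hx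
    rw [← mem_cylinder_iff_eq.1 hx]
    exact h n

theorem Finset.exists_infinite_of_forall_exists_ssuperset {α : Type*} {T : Set (Finset α)}
    (hne : T.Nonempty) (h : ∀ F ∈ T, ∃ F' ∈ T, F ⊂ F') :
    ∃ M : Set α, M.Infinite ∧ ∀ E : Finset α, ↑E ⊆ M → ∃ F ∈ T, E ⊆ F := by
  choose! g hgT hg using h
  obtain ⟨F₀, hF₀⟩ := hne
  set f : ℕ → Finset α := fun k => g^[k] F₀
  have hfT : ∀ k, f k ∈ T := by
    intro k
    induction k with
    | zero => exact hF₀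
    | succ k ih => simpa only [f, Function.iterate_succ_apply'] using hgT _ ih
  have hf : StrictMono f := strictMono_nat_of_lt_succ fun k => by
    simpa only [f, Function.iterate_succ_apply'] using hg _ (hfT k)
  have hf_coe : Monotone fun k => (f k : Set α) := fun _ _ hkl =>
    Finset.coe_subset.2 (hf.monotone hkl)
  refine ⟨⋃ k, (f k : Set α), fun hfin => ?_, fun E hE => ?_⟩
  · exact infinite_range_of_injective (Finset.coe_injective.comp hf.injective)
      (hfin.finite_subsets.subset (range_subset_iff.2 (subset_iUnion fun k => (f k : Set α))))
  · obtain ⟨k, hk⟩ := hf_coe.directed_le.exists_mem_subset_of_finset_subset_biUnion hE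
    exact ⟨f k, hfT k, Finset.coe_subset.1 hk⟩

section CantorBendixson

variable {α : Type*} [TopologicalSpace α]

theorem cbDeriv_subset (K : Set α) : cbDeriv K ⊆ K := fun _ h => h.1

theorem cbDeriv_mono {S T : Set α} (h : S ⊆ T) : cbDeriv S ⊆ cbDeriv T :=
  fun _ hx => ⟨h hx.1, closure_mono (sdiff_subset_sdiff_left h) hx.2⟩

theorem cbIter_zero (K : Set α) : cbIter K 0 = K :=
  Ordinal.limitRecOn_zero ..

theorem cbIter_add_one (K : Set α) (ξ : Ordinal) : cbIter K (ξ + 1) = cbDeriv (cbIter K ξ) :=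
  Ordinal.limitRecOn_add_one ..

theorem cbIter_of_isSuccLimit (K : Set α) {ξ : Ordinal} (h : Order.IsSuccLimit ξ) :
    cbIter K ξ = ⋂ ζ < ξ, cbIter K ζ :=
  Ordinal.limitRecOn_limit _ _ _ _ h

theorem cbIter_antitone (K : Set α) : Antitone (cbIter K) := by
  refine antitone_iff_forall_lt.2 fun ζ ξ => ?_
  induction ξ using Ordinal.limitRecOn with
  | zero => exact fun h => absurd h (not_lt_zero (a := ζ))
  | add_one ξ ih =>
    intro hζ
    rw [cbIter_add_one]
    refine (cbDeriv_subset _).trans ?_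
    rcases (Order.lt_add_one_iff.1 hζ).eq_or_lt with rfl | hlt
    exacts [subset_rfl, ih hlt]
  | limit ξ hξ _ =>
    intro hζ
    rw [cbIter_of_isSuccLimit K hξ]
    exact biInter_subset_of_mem hζ

theorem cbIter_subset (K : Set α) (ξ : Ordinal) : cbIter K ξ ⊆ K :=
  (cbIter_antitone K (zero_le (a := ξ))).trans_eq (cbIter_zero K)

theorem subset_cbIter_of_subset_cbDeriv {K D : Set α} (hDK : D ⊆ K) (hD : D ⊆ cbDeriv D)
    (ξ : Ordinal) : D ⊆ cbIter K ξ := by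
  induction ξ using Ordinal.limitRecOn with
  | zero => rwa [cbIter_zero]
  | add_one ξ ih => exact hD.trans (cbIter_add_one K ξ ▸ cbDeriv_mono ih)
  | limit ξ hξ ih => exact cbIter_of_isSuccLimit K hξ ▸ subset_iInter₂ ih

/-- Each stage at which the iteration strictly decreases loses its own point of `K`. -/
theorem Set.Countable.exists_lt_cbIter_add_one_eq {K : Set α} (hK : K.Countable) :
    ∃ ζ < (aleph 1).ord, cbIter K (ζ + 1) = cbIter K ζ := by
  by_contra! h
  have hdrop (ζ : Iio (aleph 1).ord) : ∃ x ∈ cbIter K ζ, x ∉ cbIter K (ζ + 1) :=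
    exists_of_ssubset ((cbIter_antitone K (lt_add_one (ζ : Ordinal)).le).ssubset_of_ne (h ζ ζ.2))
  choose x hx hx' using hdrop
  have hne (ζ η : Iio (aleph 1).ord) (hlt : (ζ : Ordinal) < η) : x ζ ≠ x η := fun he =>
    hx' ζ (he ▸ cbIter_antitone K (Order.add_one_le_of_lt hlt) (hx η))
  have hinj : Function.Injective fun ζ => (⟨x ζ, cbIter_subset K ζ (hx ζ)⟩ : K) := by
    intro ζ η he
    rcases lt_trichotomy (ζ : Ordinal) η with hlt | heq | hlt
    exacts [(hne ζ η hlt (congrArg Subtype.val he)).elim, Subtype.ext heq,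
      (hne η ζ hlt (congrArg Subtype.val he).symm).elim]
  have := hK.to_subtype
  have hcount : (Iio (aleph 1).ord).Countable := countable_coe_iff.1 hinj.countable
  simp [← le_aleph0_iff_set_countable] at hcount

end CantorBendixson

theorem toCantor_injective : Function.Injective toCantor := fun F F' h =>
  Finset.ext fun n => by simpa [toCantor] using congrFun h n

theorem exists_superset_of_mem_closure_image_toCantor {A : Set (Finset ℕ)} {x : ℕ → Bool}
    (hx : x ∈ closure (toCantor '' A)) (E : Finset ℕ) (hE : ∀ i ∈ E, x i = true) :
    ∃ F ∈ A, E ⊆ F := by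
  obtain ⟨_, hy, F, hF, rfl⟩ :=
    mem_closure_iff_forall_cylinder_inter_nonempty.1 hx (E.sup id + 1)
  refine ⟨F, hF, fun i hi => ?_⟩
  have := mem_cylinder_iff.1 hy i (Nat.lt_succ_of_le (E.le_sup (f := id) hi))
  simpa [toCantor, hE i hi] using this

theorem mem_closure_image_toCantor_subset_support (x : ℕ → Bool) :
    x ∈ closure (toCantor '' {E | ∀ i ∈ E, x i = true}) := by
  refine mem_closure_iff_forall_cylinder_inter_nonempty.2 fun n =>
    ⟨_, ?_, (Finset.range n).filter (x · = true), by simp, rfl⟩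
  intro i hi
  cases h : x i <;> simp [toCantor, h, hi]

theorem image_toCantor_subset_cbDeriv {M : Set ℕ} (hM : M.Infinite) :
    toCantor '' {E : Finset ℕ | (E : Set ℕ) ⊆ M} ⊆
      cbDeriv (toCantor '' {E : Finset ℕ | (E : Set ℕ) ⊆ M}) := by
  rintro _ ⟨E, hE, rfl⟩
  refine ⟨⟨E, hE, rfl⟩, mem_closure_iff_forall_cylinder_inter_nonempty.2 fun n => ?_⟩
  obtain ⟨m, ⟨hmM, hmE⟩, hnm⟩ := (hM.sdiff E.finite_toSet).exists_gt n
  refine ⟨toCantor (insert m E), fun i hi => ?_, ⟨insert m E, ?_, rfl⟩, fun h => ?_⟩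
  · simp [toCantor, (hi.trans hnm).ne]
  · simpa using insert_subset hmM hE
  · exact hmE (toCantor_injective h ▸ Finset.mem_insert_self m E)

theorem exists_ssuperset_of_subset_cbDeriv {S : Set (ℕ → Bool)} (hSr : S ⊆ range toCantor)
    (hS : S ⊆ cbDeriv S) {F : Finset ℕ} (hF : toCantor F ∈ S) :
    ∃ F' ∈ toCantor ⁻¹' S, F ⊂ F' := by
  have hcl : toCantor F ∈ closure (toCantor '' (toCantor ⁻¹' (S \ {toCantor F}))) := by
    rw [image_preimage_eq_of_subset (sdiff_subset.trans hSr)]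
    exact (hS hF).2
  obtain ⟨F', ⟨hF'S, hF'F⟩, hFF'⟩ :=
    exists_superset_of_mem_closure_image_toCantor hcl F fun i hi => by simpa [toCantor]
  exact ⟨F', hF'S, hFF'.ssubset_of_ne fun h => hF'F (h ▸ rfl)⟩

section Hereditary

variable {G : Set (Finset ℕ)}

theorem Hereditary.isClosed_image_toCantor (hG : Hereditary G)
    (h : ¬ ∃ M : Set ℕ, M.Infinite ∧ ∀ F : Finset ℕ, ↑F ⊆ M → F ∈ G) :
    IsClosed (toCantor '' G) := by
  refine closure_subset_iff_isClosed.1 fun x hx => ?_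
  have hsupp : ∀ E : Finset ℕ, ↑E ⊆ {i | x i = true} → E ∈ G := fun E hE =>
    let ⟨_, hF, hEF⟩ := exists_superset_of_mem_closure_image_toCantor hx E hE
    hG hEF hF
  have hfin : {i | x i = true}.Finite := not_not.1 fun hinf => h ⟨_, hinf, hsupp⟩
  exact ⟨hfin.toFinset, hsupp _ (by simp), funext fun i => by simp [toCantor]⟩

theorem finite_of_isClosed_image_toCantor (hG : IsClosed (toCantor '' G)) {M : Set ℕ}
    (hM : ∀ F : Finset ℕ, ↑F ⊆ M → F ∈ G) : M.Finite := by
  classical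
  obtain ⟨F, -, hF⟩ := hG.closure_subset <|
    closure_mono (image_mono fun E hE => hM E fun i hi => by simpa using hE i hi)
      (mem_closure_image_toCantor_subset_support fun i => decide (i ∈ M))
  convert F.finite_toSet
  ext i
  simpa [toCantor] using (congrFun hF i).symm

theorem Hereditary.eq_empty_of_subset_cbDeriv (hG : Hereditary G)
    (h : ¬ ∃ M : Set ℕ, M.Infinite ∧ ∀ F : Finset ℕ, ↑F ⊆ M → F ∈ G)
    {S : Set (ℕ → Bool)} (hSG : S ⊆ toCantor '' G) (hS : S ⊆ cbDeriv S) : S = ∅ := by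
  refine eq_empty_of_forall_notMem fun x hx => ?_
  obtain ⟨F, -, rfl⟩ := hSG hx
  obtain ⟨M, hM, hMS⟩ := Finset.exists_infinite_of_forall_exists_ssuperset ⟨F, hx⟩
    fun F' hF' => exists_ssuperset_of_subset_cbDeriv (hSG.trans (image_subset_range _ _)) hS hF'
  refine h ⟨M, hM, fun E hE => ?_⟩
  obtain ⟨F', hF'S, hEF'⟩ := hMS E hE
  obtain ⟨F'', hF''G, hF''⟩ := hSG hF'S
  exact hG hEF' (toCantor_injective hF'' ▸ hF''G)

theorem Hereditary.isCompact_image_toCantor_iff (hG : Hereditary G) :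
    IsCompact (toCantor '' G) ↔
      ¬ ∃ M : Set ℕ, M.Infinite ∧ ∀ F : Finset ℕ, ↑F ⊆ M → F ∈ G :=
  ⟨fun hc ⟨_, hM, hMG⟩ => hM (finite_of_isClosed_image_toCantor hc.isClosed hMG),
    fun h => (hG.isClosed_image_toCantor h).isCompact⟩

theorem Hereditary.exists_lt_cbIter_eq_empty (hG : Hereditary G)
    (h : ¬ ∃ M : Set ℕ, M.Infinite ∧ ∀ F : Finset ℕ, ↑F ⊆ M → F ∈ G) :
    ∃ ξ < (aleph 1).ord, cbIter (toCantor '' G) ξ = ∅ := by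
  obtain ⟨ζ, hζ, hfix⟩ := (G.to_countable.image toCantor).exists_lt_cbIter_add_one_eq
  refine ⟨ζ, hζ, hG.eq_empty_of_subset_cbDeriv h (cbIter_subset _ ζ) ?_⟩
  rw [← cbIter_add_one, hfix]

theorem not_exists_infinite_of_cbIter_eq_empty {ξ : Ordinal}
    (hξ : cbIter (toCantor '' G) ξ = ∅) :
    ¬ ∃ M : Set ℕ, M.Infinite ∧ ∀ F : Finset ℕ, ↑F ⊆ M → F ∈ G := by
  rintro ⟨M, hM, hMG⟩
  have hD := subset_cbIter_of_subset_cbDeriv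
    (image_mono (s := {E : Finset ℕ | (E : Set ℕ) ⊆ M}) hMG)
    (image_toCantor_subset_cbDeriv hM) ξ
  rw [hξ] at hD
  exact hD ⟨∅, by simp, rfl⟩

end Hereditary

/-- For a hereditary family `𝒢` of finite subsets of `ℕ`, the following are equivalent:
(i) there is no infinite `M ⊆ ℕ` all of whose finite subsets belong to `𝒢`;
(ii) `𝒢` is compact in the Cantor topology;
(iii) some Cantor–Bendixson derivative of `𝒢` is empty (`CB(𝒢) < ∞`);
(iv) some Cantor–Bendixson derivative of `𝒢` of countable index is empty (`CB(𝒢) < ω₁`). -/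
theorem hereditary_tfae (G : Set (Finset ℕ)) (hG : Hereditary G) :
    ((¬ ∃ M : Set ℕ, M.Infinite ∧ ∀ F : Finset ℕ, ↑F ⊆ M → F ∈ G) ↔
        IsCompact (toCantor '' G)) ∧
    (IsCompact (toCantor '' G) ↔ ∃ ξ : Ordinal, cbIter (toCantor '' G) ξ = ∅) ∧
    ((∃ ξ : Ordinal, cbIter (toCantor '' G) ξ = ∅) ↔
        ∃ ξ : Ordinal, ξ < (Cardinal.aleph 1).ord ∧ cbIter (toCantor '' G) ξ = ∅) := by
  have hcompact := hG.isCompact_image_toCantor_iff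
  exact ⟨hcompact.symm,
    ⟨fun hc => (hG.exists_lt_cbIter_eq_empty (hcompact.1 hc)).imp fun _ => And.right,
      fun ⟨_, hξ⟩ => hcompact.2 (not_exists_infinite_of_cbIter_eq_empty hξ)⟩,
    ⟨fun ⟨_, hξ⟩ => hG.exists_lt_cbIter_eq_empty
        (not_exists_infinite_of_cbIter_eq_empty hξ),
      fun ⟨_, _, hξ⟩ => (hG.exists_lt_cbIter_eq_empty
        (not_exists_infinite_of_cbIter_eq_empty hξ)).imp fun _ => And.right⟩⟩
end

section
/- If ℱ, 𝒢 ⊆ [ℕ]^{<ℕ} are hereditary families, then for any infinite M ⊆ ℕ there exists an infinite N ⊆ M such that either every element of ℱ contained in N belongs to 𝒢, or every element of 𝒢 contained in N belongs to ℱ. -/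
/-!
Put `𝒜 = ℱ \ 𝒢`. By the Nash-Williams theorem, `M` has an infinite subset `N` such that either
no member of `𝒜` lies inside `N`, which is the first alternative, or every infinite `X ⊆ N` has
an initial segment in `𝒜`. In the latter case, for `E ∈ 𝒢` inside `N`, let `t ∈ 𝒜` be an initial
segment of `E ∪ {n ∈ N | n > max E}`. Since `𝒢` is hereditary and `t ∉ 𝒢`, `t ⊄ E`, so `E ⊆ t`,
and then `E ∈ ℱ` because `ℱ` is hereditary.

Nash-Williams' theorem is proved by Galvin–Prikry combinatorial forcing: `A` accepts `s` if every
`s ∪ X` with `X ⊆ A` infinite and above `s` begins with a member of `𝒜`, and rejects `s` if no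
infinite subset of `A` accepts `s`. A fusion sequence gives `N ⊆ M` deciding `∅` and every finite
`s ⊆ N` on the tail of `N` above `s`. If `N` accepts `∅` we are in the second alternative. If it
rejects `∅`, then a rejected `s ⊆ N` has only finitely many one-point extensions `s ∪ {n}` that
are not rejected (the set of such `n` would accept `s`), so a second fusion sequence produces
`N' ⊆ N` all of whose finite subsets are rejected, hence not in `𝒜`.
-/

open Filter Set

theorem Set.Infinite.inter_Ioi {α : Type*} [LinearOrder α] [LocallyFiniteOrderBot α]
    {N : Set α} (hN : N.Infinite) (m : α) : (N ∩ Ioi m).Infinite :=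
  (hN.sdiff (finite_Iic m)).mono fun _ hx => ⟨hx.1, not_le.1 hx.2⟩

theorem exists_strictMono_fusion (P : Finset ℕ → Set ℕ → Prop)
    (step : ∀ T A, P T A → ∃ b ∈ A, ∃ B ⊆ A ∩ Ioi b, P (insert b T) B)
    {A₀ : Set ℕ} (h₀ : P ∅ A₀) :
    ∃ f : ℕ → ℕ, StrictMono f ∧
      ∀ k, ∃ A, P ((Finset.range k).image f) A ∧ ∀ i ≥ k, f i ∈ A := by
  choose b hb B hB hP using step
  let q : ℕ → {p : Finset ℕ × Set ℕ // P p.1 p.2} := fun k =>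
    Nat.rec ⟨(∅, A₀), h₀⟩
      (fun _ p => ⟨(insert (b _ _ p.2) p.1.1, B _ _ p.2), hP _ _ p.2⟩) k
  let f k := b _ _ (q k).2
  have hT : ∀ k, (q k).1.1 = (Finset.range k).image f := by
    intro k
    induction k with
    | zero => rfl
    | succ k ih => rw [Finset.range_add_one, Finset.image_insert, ← ih]
  have hA : Antitone fun k => (q k).1.2 :=
    antitone_nat_of_succ_le fun k => (hB _ _ _).trans inter_subset_left
  refine ⟨f, strictMono_nat_of_lt_succ fun k => (hB _ _ _ (hb _ _ (q (k + 1)).2)).2,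
    fun k => ⟨(q k).1.2, hT k ▸ (q k).2, fun i hi => hA hi (hb _ _ (q i).2)⟩⟩

namespace NashWilliams

def IsInitialSegment (t : Finset ℕ) (X : Set ℕ) : Prop :=
  ↑t ⊆ X ∧ ∀ x ∈ X, x ∉ t → ∀ y ∈ t, y < x

theorem IsInitialSegment.subset_of_not_subset {E t : Finset ℕ} {Y : Set ℕ}
    (hEY : ∀ x ∈ Y, ∀ y ∈ E, y < x) (ht : IsInitialSegment t (↑E ∪ Y))
    (htE : ¬t ⊆ E) : E ⊆ t := by
  obtain ⟨x, hxt, hxE⟩ := Finset.not_subset.1 htE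
  have hxY : x ∈ Y := (ht.1 hxt).resolve_left hxE
  intro y hyE
  by_contra hyt
  exact (hEY x hxY y hyE).asymm (ht.2 y (Or.inl hyE) hyt x hxt)

variable (𝒜 : Set (Finset ℕ))

def Accepts (s : Finset ℕ) (A : Set ℕ) : Prop :=
  ∀ X ⊆ A, X.Infinite → (∀ x ∈ X, ∀ y ∈ s, y < x) →
    ∃ t ∈ 𝒜, IsInitialSegment t (↑s ∪ X)

def Rejects (s : Finset ℕ) (A : Set ℕ) : Prop :=
  ∀ B ⊆ A, B.Infinite → ¬Accepts 𝒜 s B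

def Decides (s : Finset ℕ) (A : Set ℕ) : Prop :=
  Accepts 𝒜 s A ∨ Rejects 𝒜 s A

def TailDecides (N : Set ℕ) : Prop :=
  ∀ n ∈ N, ∀ s : Finset ℕ, ↑s ⊆ N ∩ Iio n → Decides 𝒜 (insert n s) (N ∩ Ioi n)

variable {𝒜} {s T : Finset ℕ} {A B N : Set ℕ}

theorem Accepts.mono (h : Accepts 𝒜 s A) (hBA : B ⊆ A) : Accepts 𝒜 s B :=
  fun X hX => h X (hX.trans hBA)

theorem Rejects.mono (h : Rejects 𝒜 s A) (hBA : B ⊆ A) : Rejects 𝒜 s B :=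
  fun C hC => h C (hC.trans hBA)

theorem Decides.mono (h : Decides 𝒜 s A) (hBA : B ⊆ A) : Decides 𝒜 s B :=
  h.imp (·.mono hBA) (·.mono hBA)

theorem accepts_of_mem (hs : s ∈ 𝒜) (A : Set ℕ) : Accepts 𝒜 s A :=
  fun _ _ _ hX => ⟨s, hs, subset_union_left, fun x hx hxs y hy =>
    hX x (hx.resolve_left hxs) y hy⟩

theorem Rejects.of_inter_Ioi {m : ℕ} (h : Rejects 𝒜 s (N ∩ Ioi m)) : Rejects 𝒜 s N :=
  fun B hBN hB hacc => h (B ∩ Ioi m) (inter_subset_inter_left _ hBN) (hB.inter_Ioi m)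
    (hacc.mono inter_subset_left)

variable (𝒜) in
theorem exists_decides (s : Finset ℕ) (hA : A.Infinite) :
    ∃ B ⊆ A, B.Infinite ∧ Decides 𝒜 s B := by
  by_cases h : Rejects 𝒜 s A
  · exact ⟨A, subset_rfl, hA, Or.inr h⟩
  · simp only [Rejects, not_forall, not_not] at h
    obtain ⟨B, hBA, hB, hacc⟩ := h
    exact ⟨B, hBA, hB, Or.inl hacc⟩

variable (𝒜) in
theorem exists_forall_decides (𝔖 : Finset (Finset ℕ)) (hA : A.Infinite) :
    ∃ B ⊆ A, B.Infinite ∧ ∀ s ∈ 𝔖, Decides 𝒜 s B := by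
  classical
  induction 𝔖 using Finset.induction_on generalizing A with
  | empty => exact ⟨A, subset_rfl, hA, by simp⟩
  | insert s 𝔖 _ ih =>
    obtain ⟨B, hBA, hB, hdec⟩ := ih hA
    obtain ⟨C, hCB, hC, hs⟩ := exists_decides 𝒜 s hB
    refine ⟨C, hCB.trans hBA, hC, Finset.forall_mem_insert _ _ _ |>.2 ⟨hs, ?_⟩⟩
    exact fun u hu => (hdec u hu).mono hCB

variable (𝒜) in
theorem exists_tailDecides (hA : A.Infinite) :
    ∃ N ⊆ A, N.Infinite ∧ Decides 𝒜 ∅ N ∧ TailDecides 𝒜 N := by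
  classical
  let P (T : Finset ℕ) (B : Set ℕ) : Prop :=
    B ⊆ A ∧ B.Infinite ∧ ∀ s ⊆ T, Decides 𝒜 s B
  have step : ∀ T B, P T B → ∃ b ∈ B, ∃ C ⊆ B ∩ Ioi b, P (insert b T) C := by
    rintro T B ⟨hBA, hB, -⟩
    obtain ⟨b, hb⟩ := hB.nonempty
    obtain ⟨C, hCB, hC, hdec⟩ :=
      exists_forall_decides 𝒜 (insert b T).powerset (hB.inter_Ioi b)
    exact ⟨b, hb, C, hCB, hCB.trans (inter_subset_left.trans hBA), hC,
      fun s hs => hdec s (Finset.mem_powerset.2 hs)⟩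
  obtain ⟨B, hBA, hB, hdec⟩ := exists_decides 𝒜 ∅ hA
  obtain ⟨f, hf, hP⟩ := exists_strictMono_fusion P step
    ⟨hBA, hB, fun s hs => Finset.subset_empty.1 hs ▸ hdec⟩
  obtain ⟨A₀, ⟨-, -, hA₀⟩, hfA₀⟩ := hP 0
  refine ⟨range f, ?_, infinite_range_of_injective hf.injective,
    (hA₀ ∅ subset_rfl).mono (range_subset_iff.2 fun i => hfA₀ i i.zero_le), ?_⟩
  · rintro _ ⟨k, rfl⟩
    obtain ⟨A', ⟨hA'A, -⟩, hfA'⟩ := hP k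
    exact hA'A (hfA' k le_rfl)
  · rintro _ ⟨j, rfl⟩ s hs
    obtain ⟨A', ⟨-, -, hA'⟩, hfA'⟩ := hP (j + 1)
    have hsub : insert (f j) s ⊆ (Finset.range (j + 1)).image f := by
      refine Finset.insert_subset (Finset.mem_image_of_mem _ (by simp)) fun y hy => ?_
      obtain ⟨⟨i, rfl⟩, hi⟩ := hs hy
      exact Finset.mem_image_of_mem _
        (Finset.mem_range.2 (Nat.lt_succ_of_lt (hf.lt_iff_lt.1 hi)))
    refine (hA' _ hsub).mono ?_
    rintro _ ⟨⟨i, rfl⟩, hi⟩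
    exact hfA' i (hf.lt_iff_lt.1 hi)

theorem accepts_of_forall_accepts_insert
    (h : ∀ n ∈ A, Accepts 𝒜 (insert n s) (A ∩ Ioi n)) : Accepts 𝒜 s A := by
  intro X hXA hX hXs
  set n := sInf X
  have hnX : n ∈ X := Nat.sInf_mem hX.nonempty
  have hX' : X \ {n} ⊆ A ∩ Ioi n := fun x hx =>
    ⟨hXA hx.1, (Nat.sInf_le hx.1).lt_of_ne (Ne.symm hx.2)⟩
  obtain ⟨t, ht, hinit⟩ := h n (hXA hnX) (X \ {n}) hX' (hX.sdiff (finite_singleton n))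
    fun x hx y hy => (Finset.mem_insert.1 hy).elim (· ▸ (hX' hx).2) (hXs x hx.1 y)
  refine ⟨t, ht, ?_⟩
  rwa [Finset.coe_insert, insert_union, ← union_insert, insert_sdiff_singleton,
    insert_eq_of_mem hnX] at hinit

theorem eventually_rejects_insert (hN : TailDecides 𝒜 N) (hsN : ↑s ⊆ N)
    (hs : Rejects 𝒜 s N) :
    ∀ᶠ n in atTop, n ∈ N → (∀ y ∈ s, y < n) → Rejects 𝒜 (insert n s) N := by
  by_contra hbad
  simp only [not_eventually, Classical.not_imp, Nat.frequently_atTop_iff_infinite] at hbad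
  refine hs _ (fun n hn => hn.1) hbad (accepts_of_forall_accepts_insert ?_)
  rintro n ⟨hnN, hsn, hrej⟩
  refine ((hN n hnN s fun y hy => ⟨hsN hy, hsn y hy⟩).resolve_right
    fun h => hrej h.of_inter_Ioi).mono ?_
  exact inter_subset_inter_left _ fun m hm => hm.1

theorem exists_mem_forall_subset_insert_rejects (hN : TailDecides 𝒜 N) (hTN : ↑T ⊆ N)
    (hT : ∀ s ⊆ T, Rejects 𝒜 s N) (hAN : A ⊆ N) (hA : A.Infinite) :
    ∃ b ∈ A, ∀ s ⊆ insert b T, Rejects 𝒜 s N := by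
  classical
  have hev : ∀ᶠ n in atTop, (∀ y ∈ T, y < n) ∧ ∀ s ∈ T.powerset,
      n ∈ N → (∀ y ∈ s, y < n) → Rejects 𝒜 (insert n s) N :=
    ((eventually_all_finset T).2 fun y _ => eventually_gt_atTop y).and
      ((eventually_all_finset _).2 fun s hs => eventually_rejects_insert hN
        ((Finset.coe_subset.2 (Finset.mem_powerset.1 hs)).trans hTN)
        (hT s (Finset.mem_powerset.1 hs)))
  obtain ⟨b, hbA, hbT, hbrej⟩ :=
    ((Nat.frequently_atTop_iff_infinite.2 hA).and_eventually hev).exists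
  refine ⟨b, hbA, fun s hs => ?_⟩
  have hsT := Finset.subset_insert_iff.1 hs
  by_cases hbs : b ∈ s
  · rw [← Finset.insert_erase hbs]
    exact hbrej _ (Finset.mem_powerset.2 hsT) (hAN hbA) fun y hy => hbT y (hsT hy)
  · exact hT s (Finset.erase_eq_of_notMem hbs ▸ hsT)

theorem exists_forall_rejects (hNinf : N.Infinite) (hN : TailDecides 𝒜 N)
    (h : Rejects 𝒜 ∅ N) :
    ∃ N' ⊆ N, N'.Infinite ∧ ∀ s : Finset ℕ, ↑s ⊆ N' → Rejects 𝒜 s N := by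
  classical
  let P (T : Finset ℕ) (A : Set ℕ) : Prop :=
    ↑T ⊆ N ∧ A ⊆ N ∧ A.Infinite ∧ ∀ s ⊆ T, Rejects 𝒜 s N
  have step : ∀ T A, P T A → ∃ b ∈ A, ∃ B ⊆ A ∩ Ioi b, P (insert b T) B := by
    rintro T A ⟨hTN, hAN, hA, hT⟩
    obtain ⟨b, hbA, hrej⟩ := exists_mem_forall_subset_insert_rejects hN hTN hT hAN hA
    refine ⟨b, hbA, A ∩ Ioi b, subset_rfl, ?_, inter_subset_left.trans hAN,
      hA.inter_Ioi b, hrej⟩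
    rw [Finset.coe_insert]
    exact insert_subset (hAN hbA) hTN
  obtain ⟨f, hf, hP⟩ := exists_strictMono_fusion P step
    ⟨by simp, subset_rfl, hNinf, fun s hs => Finset.subset_empty.1 hs ▸ h⟩
  obtain ⟨A₀, ⟨-, hA₀N, -⟩, hfA₀⟩ := hP 0
  refine ⟨range f, range_subset_iff.2 fun i => hA₀N (hfA₀ i i.zero_le),
    infinite_range_of_injective hf.injective, fun s hs => ?_⟩
  obtain ⟨k, hk⟩ : ∃ k, s ⊆ (Finset.range k).image f := by
    obtain ⟨s', -, rfl⟩ := Finset.subset_set_image_iff.1 (image_univ (f := f) ▸ hs)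
    obtain ⟨k, hk⟩ := s'.exists_nat_subset_range
    exact ⟨k, Finset.image_subset_image hk⟩
  obtain ⟨A, ⟨-, -, -, hrej⟩, -⟩ := hP k
  exact hrej s hk

theorem nash_williams (𝒜 : Set (Finset ℕ)) {M : Set ℕ} (hM : M.Infinite) :
    ∃ N ⊆ M, N.Infinite ∧ ((∀ s ∈ 𝒜, ¬↑s ⊆ N) ∨
      ∀ X ⊆ N, X.Infinite → ∃ t ∈ 𝒜, IsInitialSegment t X) := by
  obtain ⟨N, hNM, hN, hacc | hrej, htail⟩ := exists_tailDecides 𝒜 hM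
  · exact ⟨N, hNM, hN, Or.inr fun X hXN hX => by
      simpa using hacc X hXN hX (by simp)⟩
  · obtain ⟨N', hN'N, hN', hrej'⟩ := exists_forall_rejects hN htail hrej
    exact ⟨N', hN'N.trans hNM, hN', Or.inl fun s hs hsN' =>
      hrej' s hsN' N' hN'N hN' (accepts_of_mem hs N')⟩

end NashWilliams

open NashWilliams in
/-- Gasparis' dichotomy: if `ℱ, 𝒢` are hereditary families of finite subsets of `ℕ`,
then any infinite `M ⊆ ℕ` has an infinite subset `N` such that either every member of
`ℱ` contained in `N` lies in `𝒢`, or every member of `𝒢` contained in `N` lies in `ℱ`. -/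
theorem gasparis_dichotomy (F G : Set (Finset ℕ)) (hF : Hereditary F) (hG : Hereditary G)
    (M : Set ℕ) (hM : M.Infinite) :
    ∃ N : Set ℕ, N ⊆ M ∧ N.Infinite ∧
      ((∀ E ∈ F, ↑E ⊆ N → E ∈ G) ∨ (∀ E ∈ G, ↑E ⊆ N → E ∈ F)) := by
  obtain ⟨N, hNM, hN, hsep | hinit⟩ := nash_williams {E | E ∈ F ∧ E ∉ G} hM
  · exact ⟨N, hNM, hN, Or.inl fun E hEF hEN => by_contra fun hEG => hsep E ⟨hEF, hEG⟩ hEN⟩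
  refine ⟨N, hNM, hN, Or.inr fun E hEG hEN => ?_⟩
  obtain ⟨t, ⟨htF, htG⟩, ht⟩ := hinit (↑E ∪ N ∩ Ioi (E.sup id))
    (union_subset hEN inter_subset_left) ((hN.inter_Ioi _).mono subset_union_right)
  have hEt : E ⊆ t := ht.subset_of_not_subset
    (fun x hx y hy => (Finset.le_sup (f := id) hy).trans_lt hx.2) fun htE => htG (hG htE hEG)
  exact hF hEt htF
end

section
/- Let X be a Banach space, K ⊆ X* weak*-compact, Z ⊆ X a closed subspace with dim(X/Z) < ∞, and x* ∈ s_ε(K) (the ε-Szlenk derivative of K). Then for any 0 < δ < ε/4 and any weak*-neighborhood v of x*, there exist y* ∈ K ∩ v and z ∈ B_Z with Re y*(z) > δ. -/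
open Ordinal

variable {X : Type*} [NormedAddCommGroup X] [NormedSpace ℝ X]

/-- The dual norm of a weak-star functional. -/
noncomputable def dualNorm (f : WeakDual ℝ X) : ℝ := ‖WeakDual.toStrongDual f‖

/-- The `ε`-Szlenk derivative of a weak*-compact set `K ⊆ X*`: the points of `K` all of
whose weak*-neighborhoods meet `K` in a set of diameter `> ε`. -/
def szDeriv (ε : ℝ) (K : Set (WeakDual ℝ X)) : Set (WeakDual ℝ X) :=
  {f | f ∈ K ∧ ∀ v ∈ nhds f, ∃ g ∈ v ∩ K, ∃ h ∈ v ∩ K, ε < dualNorm (g - h)}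

/-- Transfinite iterates of the `ε`-Szlenk derivative. -/
noncomputable def szIter (ε : ℝ) (K : Set (WeakDual ℝ X)) (ξ : Ordinal) :
    Set (WeakDual ℝ X) :=
  Ordinal.limitRecOn ξ K (fun _ S => szDeriv ε S)
    (fun o _ ih => ⋂ (ζ : Ordinal) (h : ζ < o), ih ζ h)

/-!
Suppose every `y ∈ K ∩ v` satisfies `y ≤ δ` on `B_Z`; then `g - h ≤ 2δ` on `B_Z` for all
`g, h ∈ K ∩ v`. A finite `γ`-net of the unit ball of the finite-dimensional space `X ⧸ Z` lifts to a
finite `S ⊆ B_X` such that every `x ∈ B_X` is `s + z + w` with `s ∈ S`, `z ∈ Z`, `‖z‖ ≤ 2 + γ` and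
`‖w‖ < γ`. Hence a functional `f` that is `≤ a‖·‖` on `Z` and `η`-small on `S` has norm at most
`(2 + γ) a + η + γ ‖f‖`, which is `≤ ε` for `a = 2δ` and small `γ, η` because `4δ < ε`. The
functionals close to `x*` on `S` form a weak*-neighbourhood, inside which the Szlenk condition
produces `g, h` with `‖g - h‖ > ε`: a contradiction.
-/

open Metric Set Filter Topology

theorem WeakDual.setOf_forall_dist_apply_lt_mem_nhds {𝕜 E : Type*} [NormedField 𝕜]
    [AddCommMonoid E] [TopologicalSpace E] [Module 𝕜 E] (x : WeakDual 𝕜 E) {S : Set E}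
    (hS : S.Finite) {r : ℝ} (hr : 0 < r) :
    {y : WeakDual 𝕜 E | ∀ s ∈ S, dist (y s) (x s) < r} ∈ 𝓝 x :=
  (eventually_all_finite hS).2 fun s _ =>
    (WeakDual.eval_continuous s).continuousAt.eventually (ball_mem_nhds _ hr)

theorem Submodule.exists_finite_approx_closedBall (Z : Submodule ℝ X)
    [IsClosed (Z : Set X)] [FiniteDimensional ℝ (X ⧸ Z)] {γ : ℝ} (hγ : 0 < γ) :
    ∃ S ⊆ closedBall (0 : X) 1, S.Finite ∧
      ∀ x ∈ closedBall (0 : X) 1, ∃ s ∈ S, ∃ z ∈ Z, ‖x - s - z‖ < γ := by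
  have htb : TotallyBounded (Z.mkQ '' closedBall 0 1) :=
    (isCompact_closedBall (0 : X ⧸ Z) 1).totallyBounded.subset <| by
      rintro _ ⟨x, hx, rfl⟩
      simpa using (Submodule.Quotient.norm_mk_le Z x).trans (mem_closedBall_zero_iff.1 hx)
  obtain ⟨S, hS, hSfin, hcover⟩ :=
    exists_subset_image_finite_and.1 (finite_approx_of_totallyBounded htb γ hγ)
  refine ⟨S, hS, hSfin, fun x hx => ?_⟩
  obtain ⟨s, hs, hxs⟩ : ∃ s ∈ S, dist (Z.mkQ x) (Z.mkQ s) < γ := by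
    simpa using hcover (mem_image_of_mem _ hx)
  rw [dist_eq_norm, ← map_sub] at hxs
  obtain ⟨m, hm, hmγ⟩ := Submodule.Quotient.norm_mk_lt (Z.mkQ (x - s)) (sub_pos.2 hxs)
  refine ⟨s, hs, x - s - m, (Submodule.Quotient.eq Z).1 hm.symm, ?_⟩
  simpa using hmγ

theorem ContinuousLinearMap.apply_le_mul_norm_of_forall_norm_le_one (f : StrongDual ℝ X)
    {Z : Submodule ℝ X} {a : ℝ} (hf : ∀ z ∈ Z, ‖z‖ ≤ 1 → f z ≤ a) {z : X} (hz : z ∈ Z) :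
    f z ≤ a * ‖z‖ := by
  rcases eq_or_ne z 0 with rfl | hz0
  · simp
  have hnorm : 0 < ‖z‖ := norm_pos_iff.2 hz0
  have := hf (‖z‖⁻¹ • z) (Z.smul_mem _ hz) (by simp [norm_smul, hnorm.ne'])
  rwa [map_smul, _root_.smul_eq_mul, inv_mul_le_iff₀ hnorm, mul_comm] at this

theorem ContinuousLinearMap.norm_le_of_forall_approx (f : StrongDual ℝ X) {Z : Submodule ℝ X}
    {S : Set X} {γ η a : ℝ} (hγ : 0 ≤ γ) (hη : 0 ≤ η) (ha : 0 ≤ a)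
    (hS : S ⊆ closedBall 0 1)
    (happrox : ∀ x ∈ closedBall (0 : X) 1, ∃ s ∈ S, ∃ z ∈ Z, ‖x - s - z‖ < γ)
    (hfS : ∀ s ∈ S, |f s| ≤ η) (hfZ : ∀ z ∈ Z, f z ≤ a * ‖z‖) :
    ‖f‖ ≤ (2 + γ) * a + η + γ * ‖f‖ := by
  have hf_ball : ∀ x ∈ closedBall (0 : X) 1, f x ≤ (2 + γ) * a + η + γ * ‖f‖ := by
    intro x hx
    obtain ⟨s, hs, z, hz, hxsz⟩ := happrox x hx
    have hz_norm : ‖z‖ ≤ 2 + γ :=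
      calc ‖z‖ = ‖x - s - (x - s - z)‖ := by rw [sub_sub_cancel]
        _ ≤ ‖x‖ + ‖s‖ + ‖x - s - z‖ := (norm_sub_le _ _).trans (by gcongr; exact norm_sub_le _ _)
        _ ≤ 1 + 1 + γ := by
          gcongr
          · exact mem_closedBall_zero_iff.1 hx
          · exact mem_closedBall_zero_iff.1 (hS hs)
        _ = 2 + γ := by ring
    have hrest : f (x - s - z) ≤ γ * ‖f‖ :=
      calc f (x - s - z) ≤ ‖f‖ * ‖x - s - z‖ := (le_abs_self _).trans (f.le_opNorm _)
        _ ≤ γ * ‖f‖ := by rw [mul_comm]; gcongr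
    calc f x = f z + f s + f (x - s - z) := by simp only [map_sub]; ring
      _ ≤ a * (2 + γ) + η + γ * ‖f‖ := by
        gcongr
        · exact (hfZ z hz).trans (by gcongr)
        · exact (le_abs_self _).trans (hfS s hs)
      _ = (2 + γ) * a + η + γ * ‖f‖ := by ring
  refine f.opNorm_le_of_unit_norm (by positivity) fun x hx => ?_
  have hx_ball : ∀ y : X, ‖y‖ = 1 → y ∈ closedBall 0 1 := fun y hy =>
    mem_closedBall_zero_iff.2 hy.le
  rw [Real.norm_eq_abs, abs_le]
  refine ⟨?_, hf_ball x (hx_ball x hx)⟩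
  have := hf_ball (-x) (hx_ball _ (by rwa [norm_neg]))
  rw [map_neg] at this
  linarith

theorem Submodule.exists_finite_forall_norm_le (Z : Submodule ℝ X)
    [IsClosed (Z : Set X)] [FiniteDimensional ℝ (X ⧸ Z)] {a b : ℝ} (ha : 0 ≤ a)
    (hab : 2 * a < b) :
    ∃ S : Set X, S.Finite ∧ ∃ η > 0, ∀ f : StrongDual ℝ X,
      (∀ s ∈ S, |f s| ≤ η) → (∀ z ∈ Z, f z ≤ a * ‖z‖) → ‖f‖ ≤ b := by
  set γ := (b - 2 * a) / (2 * (a + b))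
  set η := (b - 2 * a) / 2
  have hab_pos : 0 < a + b := by linarith
  have hγ : 0 < γ := div_pos (by linarith) (by positivity)
  have hγ1 : 0 < 1 - γ := by
    rw [sub_pos, div_lt_one (by positivity)]
    linarith
  have hγη : (2 + γ) * a + η = (1 - γ) * b := by
    have : γ * (a + b) = η := by simp only [γ, η]; field_simp
    linear_combination this
  obtain ⟨S, hS, hSfin, happrox⟩ := Z.exists_finite_approx_closedBall hγ
  refine ⟨S, hSfin, η, by positivity, fun f hfS hfZ => ?_⟩
  have := f.norm_le_of_forall_approx hγ.le (by positivity) ha hS happrox hfS hfZ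
  exact le_of_mul_le_mul_left (by linarith) hγ1

theorem szDeriv_slice_general {X : Type*} [NormedAddCommGroup X] [NormedSpace ℝ X]
    (K : Set (WeakDual ℝ X))
    (Z : Submodule ℝ X) (hZ : IsClosed (Z : Set X)) (hcodim : FiniteDimensional ℝ (X ⧸ Z))
    (ε δ : ℝ) (hδ : 0 < δ) (hδε : δ < ε / 4)
    (x : WeakDual ℝ X) (hx : x ∈ szDeriv ε K) (v : Set (WeakDual ℝ X)) (hv : v ∈ nhds x) :
    ∃ y ∈ K ∩ v, ∃ z ∈ Z, ‖z‖ ≤ 1 ∧ δ < y z := by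
  by_contra! hsmall
  obtain ⟨S, hS, η, hη, hnorm⟩ :=
    Z.exists_finite_forall_norm_le (a := 2 * δ) (b := ε) (by positivity) (by linarith)
  obtain ⟨g, ⟨⟨hgv, hgS⟩, hgK⟩, h, ⟨⟨hhv, hhS⟩, hhK⟩, hgh⟩ :=
    hx.2 _ (inter_mem hv (x.setOf_forall_dist_apply_lt_mem_nhds hS (half_pos hη)))
  refine hgh.not_ge (hnorm _ (fun s hs => ?_) fun w hw => ?_)
  · have := dist_triangle_right (g s) (h s) (x s)
    rw [Real.dist_eq] at this
    change |g s - h s| ≤ η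
    linarith [hgS s hs, hhS s hs]
  · refine ContinuousLinearMap.apply_le_mul_norm_of_forall_norm_le_one _ (fun z hz hz1 => ?_) hw
    have hgz := hsmall g ⟨hgK, hgv⟩ z hz hz1
    have hhz := hsmall h ⟨hhK, hhv⟩ (-z) (Z.neg_mem hz) (by rwa [norm_neg])
    rw [map_neg] at hhz
    change g z - h z ≤ 2 * δ
    linarith

/-- Let `X` be a Banach space, `K ⊆ X*` weak*-compact, `Z ⊆ X` a closed subspace of
finite codimension, and `x* ∈ s_ε(K)`. Then for any `0 < δ < ε/4` and any
weak*-neighborhood `v` of `x*`, there exist `y* ∈ K ∩ v` and `z` in the unit ball of `Z`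
with `Re y*(z) > δ`. -/
theorem szDeriv_slice {X : Type*} [NormedAddCommGroup X] [NormedSpace ℝ X]
    [CompleteSpace X] (K : Set (WeakDual ℝ X)) (hK : IsCompact K)
    (Z : Submodule ℝ X) (hZ : IsClosed (Z : Set X)) (hcodim : FiniteDimensional ℝ (X ⧸ Z))
    (ε δ : ℝ) (hδ : 0 < δ) (hδε : δ < ε / 4)
    (x : WeakDual ℝ X) (hx : x ∈ szDeriv ε K) (v : Set (WeakDual ℝ X)) (hv : v ∈ nhds x) :
    ∃ y ∈ K ∩ v, ∃ z ∈ Z, ‖z‖ ≤ 1 ∧ δ < y z :=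
  szDeriv_slice_general K Z hZ hcodim ε δ hδ hδε x hx v hv
end
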